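/- Let a > 0 and b > 0 be real numbers. For i = 1, 2, let 0 < N₁ < N₂ and let t₁ ∈ (0, N₁) and t₂ ∈ (0, N₂) satisfy a·g(t₁/a) = b·g((N₁−t₁)/b) and a·g(t₂/a) = b·g((N₂−t₂)/b), where g(x) = (x+1)·log(x+1) − x·log(x). Then t₁ < t₂ and N₁ − t₁ < N₂ − t₂; that is, both N ↦ N_A*(N) and N ↦ N − N_A*(N) are strictly increasing. -/

import Mathlib

/-- `g x = (x+1) log(x+1) - x log x`, the von Neumann entropy of a single-mode
thermal state with mean photon number `x` (with the convention `0 * log 0 = 0`,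
which holds since `Real.log 0 = 0`). -/
noncomputable def g (x : ℝ) : ℝ := (x + 1) * Real.log (x + 1) - x * Real.log x

lemma g_hasDerivAt {x : ℝ} (hx : 0 < x) :
    HasDerivAt g (Real.log (x + 1) - Real.log x) x := by
  have h1 : HasDerivAt (fun y : ℝ => y + 1) 1 x := (hasDerivAt_id x).add_const 1
  have h2 : HasDerivAt (fun y : ℝ => (y + 1) * Real.log (y + 1))
      ((Real.log (x + 1) + 1) * 1) x :=
    by have := (Real.hasDerivAt_mul_log (by linarith : x + 1 ≠ 0)).comp x h1; exact this
  have h3 : HasDerivAt (fun y : ℝ => y * Real.log y) (Real.log x + 1) x :=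
    Real.hasDerivAt_mul_log hx.ne'
  have := h2.sub h3
  exact this.congr_deriv (by ring)

lemma g_strictMonoOn : StrictMonoOn g (Set.Ioi 0) := by
  apply strictMonoOn_of_deriv_pos (convex_Ioi 0)
  · exact fun x hx => (g_hasDerivAt hx).continuousAt.continuousWithinAt
  · intro x hx
    rw [interior_Ioi] at hx
    rw [(g_hasDerivAt hx).deriv]
    have : Real.log x < Real.log (x + 1) := Real.log_lt_log hx (by linarith)
    linarith

/-- Both `N ↦ N_A*(N)` and `N ↦ N - N_A*(N)` are strictly increasing: if
`t₁, t₂` solve Eq. (4) for `N₁ < N₂`, then `t₁ < t₂` and `N₁ - t₁ < N₂ - t₂`. -/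
theorem NAstar_strictMono (a b N₁ N₂ t₁ t₂ : ℝ) (ha : 0 < a) (hb : 0 < b)
    (hN₁ : 0 < N₁) (hN : N₁ < N₂)
    (ht₁ : 0 < t₁) (ht₁' : t₁ < N₁)
    (ht₂ : 0 < t₂) (ht₂' : t₂ < N₂)
    (heq₁ : a * g (t₁ / a) = b * g ((N₁ - t₁) / b))
    (heq₂ : a * g (t₂ / a) = b * g ((N₂ - t₂) / b)) :
    t₁ < t₂ ∧ N₁ - t₁ < N₂ - t₂ := by
  have m1 : t₁ / a ∈ Set.Ioi (0:ℝ) := Set.mem_Ioi.mpr (div_pos ht₁ ha)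
  have m2 : t₂ / a ∈ Set.Ioi (0:ℝ) := Set.mem_Ioi.mpr (div_pos ht₂ ha)
  have m3 : (N₁ - t₁) / b ∈ Set.Ioi (0:ℝ) :=
    Set.mem_Ioi.mpr (div_pos (by linarith) hb)
  have m4 : (N₂ - t₂) / b ∈ Set.Ioi (0:ℝ) :=
    Set.mem_Ioi.mpr (div_pos (by linarith) hb)
  have htlt : t₁ < t₂ := by
    by_contra h
    push_neg at h
    have h1 : N₁ - t₁ < N₂ - t₂ := by linarith
    have h2 : g ((N₁ - t₁) / b) < g ((N₂ - t₂) / b) :=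
      g_strictMonoOn m3 m4 ((div_lt_div_iff_of_pos_right hb).mpr (by linarith))
    have h3 : a * g (t₁ / a) < a * g (t₂ / a) := by
      rw [heq₁, heq₂]; exact (mul_lt_mul_iff_right₀ hb).mpr h2
    have h4 : g (t₁ / a) < g (t₂ / a) := lt_of_mul_lt_mul_left h3 ha.le
    have h5 : t₁ / a < t₂ / a := (g_strictMonoOn.lt_iff_lt m1 m2).mp h4
    have : t₁ < t₂ := (div_lt_div_iff_of_pos_right ha).mp h5
    linarith
  refine ⟨htlt, ?_⟩
  by_contra h
  push_neg at h
  have h2 : g ((N₂ - t₂) / b) ≤ g ((N₁ - t₁) / b) := by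
    rcases eq_or_lt_of_le h with heq | hlt
    · rw [heq]
    · exact le_of_lt (g_strictMonoOn m4 m3 ((div_lt_div_iff_of_pos_right hb).mpr (by linarith)))
  have h3 : a * g (t₂ / a) ≤ a * g (t₁ / a) := by
    rw [heq₁, heq₂]; exact (mul_le_mul_iff_right₀ hb).mpr h2
  have h4 : g (t₂ / a) ≤ g (t₁ / a) := le_of_mul_le_mul_left h3 ha
  have h5 : t₂ / a ≤ t₁ / a := (g_strictMonoOn.le_iff_le m2 m1).mp h4
  have : t₂ ≤ t₁ := (div_le_div_iff_of_pos_right ha).mp h5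
  linarith
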